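/- Let A and B be small categories, i : A → B a fully faithful functor, C a category with all small colimits, and F : B → C a functor. Consider the natural transformation Lan_{y_B ∘ i}(F ∘ i) → Lan_{y_B}(F) of functors P(B) → C obtained from the whiskered counit Lan_{y_B}(F) ∘ i_! ∘ i^* → Lan_{y_B}(F) of the adjunction i_! ⊣ i^* by transporting along the isomorphism Lan_{y_A}(F ∘ i) ≅ Lan_{y_B}(F) ∘ i_! and the isomorphism Lan_{y_A}(F ∘ i) ∘ i^* ≅ Lan_{y_B ∘ i}(F ∘ i). After restricting along the Yoneda embedding y_B, this natural transformation agrees with the canonical natural transformation Lan_i(F ∘ i) → F induced by the counit of the adjunction between left Kan extension along i and precomposition with i. -/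

import Mathlib

/-!
Both sides are maps out of the left Kan extension `Lan_i(F ∘ i)`, so it suffices to compare them
after precomposing with its unit at `a : A`. There `kappa` becomes the identity and `cComp` becomes
the unit of `Lan_{y_B ∘ i}(F ∘ i)`; unwinding `theta` through the defining properties of `dTwo` and
`dOne` and the naturality of `dOne` leaves `Lan_{y_B}(F)` applied to the composite
`y_B(i a) ≅ i_!(y_A a) ⟶ i_!(i^* y_B(i a)) ⟶ y_B(i a)`. That composite is the identity because
`y_B(i a)` is itself the left Kan extension of `y_A a` along `i^op`, and after precomposing with
that unit it reduces to a triangle identity of `i_! ⊣ i^*`.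
-/

open CategoryTheory CategoryTheory.Limits

universe v w u

variable {A B : Type u} [SmallCategory A] [SmallCategory B]
  {C : Type w} [Category.{v} C] [HasColimitsOfSize.{u, u} C]

def canNat (i : A ⥤ B) :
    (yoneda : A ⥤ Aᵒᵖ ⥤ Type u) ⟶
      i ⋙ (yoneda : B ⥤ Bᵒᵖ ⥤ Type u) ⋙ (Functor.whiskeringLeft Aᵒᵖ Bᵒᵖ (Type u)).obj i.op where
  app a := yonedaMap i a
  naturality a a' f := by
    ext x g
    simp [yonedaMap]

namespace CategoryTheory.Presheaf

/-- Port: the old Mathlib iso `F ⋙ yoneda ≅ yoneda ⋙ F.op.lan`, rebuilt from its ULift version. -/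
noncomputable def compYonedaIsoYonedaCompLan {C : Type u} [SmallCategory C] {D : Type u}
    [SmallCategory D] (F : C ⥤ D) :
    F ⋙ (yoneda : D ⥤ Dᵒᵖ ⥤ Type u) ≅ yoneda ⋙ F.op.lan :=
  Functor.isoWhiskerLeft F (uliftYonedaIsoYoneda.{u, u, u} (C := D)).symm ≪≫
    compULiftYonedaIsoULiftYonedaCompLan.{0} F ≪≫
    Functor.isoWhiskerRight (uliftYonedaIsoYoneda.{u, u, u} (C := C)) F.op.lan

end CategoryTheory.Presheaf

variable (i : A ⥤ B) [i.Full] [i.Faithful] (F : B ⥤ C)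

/-- The map `Lan_{y_A}(F ∘ i) ⟶ F̃ ∘ i_!` induced by the canonical identification
`F ∘ i ≅ F̃ ∘ i_! ∘ y_A`. -/
noncomputable def dOne : yoneda.leftKanExtension (i ⋙ F) ⟶ i.op.lan ⋙ yoneda.leftKanExtension F :=
  (yoneda.leftKanExtension (i ⋙ F)).descOfIsLeftKanExtension
    (yoneda.leftKanExtensionUnit (i ⋙ F)) (i.op.lan ⋙ yoneda.leftKanExtension F)
    (Functor.whiskerLeft i (yoneda.leftKanExtensionUnit F) ≫
      (Functor.associator i yoneda (yoneda.leftKanExtension F)).inv ≫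
      Functor.whiskerRight (Presheaf.compYonedaIsoYonedaCompLan i).hom (yoneda.leftKanExtension F) ≫
      (Functor.associator yoneda i.op.lan (yoneda.leftKanExtension F)).hom)

/-- The canonical comparison map `Lan_{y_B ∘ i}(F ∘ i) ⟶ Lan_{y_A}(F ∘ i) ∘ i^*`. -/
noncomputable def dTwo :
    (i ⋙ yoneda).leftKanExtension (i ⋙ F) ⟶
      (Functor.whiskeringLeft Aᵒᵖ Bᵒᵖ (Type u)).obj i.op ⋙ yoneda.leftKanExtension (i ⋙ F) :=
  ((i ⋙ yoneda).leftKanExtension (i ⋙ F)).descOfIsLeftKanExtension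
    ((i ⋙ yoneda).leftKanExtensionUnit (i ⋙ F))
    ((Functor.whiskeringLeft Aᵒᵖ Bᵒᵖ (Type u)).obj i.op ⋙ yoneda.leftKanExtension (i ⋙ F))
    (yoneda.leftKanExtensionUnit (i ⋙ F) ≫
      Functor.whiskerRight (canNat i) (yoneda.leftKanExtension (i ⋙ F)) ≫
      (Functor.associator i (yoneda ⋙ (Functor.whiskeringLeft Aᵒᵖ Bᵒᵖ (Type u)).obj i.op)
        (yoneda.leftKanExtension (i ⋙ F))).hom ≫
      Functor.whiskerLeft i (Functor.associator yoneda ((Functor.whiskeringLeft Aᵒᵖ Bᵒᵖ (Type u)).obj i.op)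
        (yoneda.leftKanExtension (i ⋙ F))).hom ≫
      (Functor.associator i yoneda
        ((Functor.whiskeringLeft Aᵒᵖ Bᵒᵖ (Type u)).obj i.op ⋙ yoneda.leftKanExtension (i ⋙ F))).inv)

/-- The transport of the whiskered counit along the two canonical identifications. -/
noncomputable def theta :
    (i ⋙ yoneda).leftKanExtension (i ⋙ F) ⟶ yoneda.leftKanExtension F :=
  dTwo i F ≫
    Functor.whiskerLeft ((Functor.whiskeringLeft Aᵒᵖ Bᵒᵖ (Type u)).obj i.op) (dOne i F) ≫
    (Functor.associator ((Functor.whiskeringLeft Aᵒᵖ Bᵒᵖ (Type u)).obj i.op) i.op.lan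
      (yoneda.leftKanExtension F)).inv ≫
    Functor.whiskerRight (i.op.lanAdjunction (Type u)).counit (yoneda.leftKanExtension F) ≫
    (yoneda.leftKanExtension F).leftUnitor.hom

/-- The canonical comparison `Lan_i(F ∘ i) ⟶ y_B ⋙ Lan_{y_B ∘ i}(F ∘ i)`. -/
noncomputable def cComp :
    i.leftKanExtension (i ⋙ F) ⟶ yoneda ⋙ (i ⋙ yoneda).leftKanExtension (i ⋙ F) :=
  (i.leftKanExtension (i ⋙ F)).descOfIsLeftKanExtension
    (i.leftKanExtensionUnit (i ⋙ F))
    (yoneda ⋙ (i ⋙ yoneda).leftKanExtension (i ⋙ F))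
    ((i ⋙ yoneda).leftKanExtensionUnit (i ⋙ F) ≫
      (Functor.associator i yoneda ((i ⋙ yoneda).leftKanExtension (i ⋙ F))).hom)

/-- The canonical natural transformation `Lan_i(F ∘ i) ⟶ F`. -/
noncomputable def kappa : i.leftKanExtension (i ⋙ F) ⟶ F :=
  (i.leftKanExtension (i ⋙ F)).descOfIsLeftKanExtension
    (i.leftKanExtensionUnit (i ⋙ F)) F (𝟙 (i ⋙ F))

section

variable (i : A ⥤ B)

lemma yonedaMap_comp_whiskerLeft_compYonedaIsoYonedaCompLan_hom_app (a : A) :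
    yonedaMap i a ≫ Functor.whiskerLeft i.op ((Presheaf.compYonedaIsoYonedaCompLan i).hom.app a) =
      i.op.lanUnit.app (yoneda.obj a) := by
  have yonedaMap_eq : yonedaMap i a ≫
      Functor.whiskerLeft i.op (uliftYonedaIsoYoneda.{u, u, u}.inv.app (i.obj a)) =
        uliftYonedaIsoYoneda.{u, u, u}.inv.app a ≫ uliftYonedaMap.{0} i a := by
    ext x f
    rfl
  have ulift_fac : uliftYonedaMap.{0} i a ≫
      Functor.whiskerLeft i.op ((Presheaf.compULiftYonedaIsoULiftYonedaCompLan.{0} i).hom.app a) =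
        i.op.lanUnit.app (uliftYoneda.{u}.obj a) := by
    simp only [Presheaf.compULiftYonedaIsoULiftYonedaCompLan, NatIso.ofComponents_hom_app,
      Functor.leftKanExtensionUnique_hom]
    exact Functor.descOfIsLeftKanExtension_fac _ _ _ _
  have lanUnit_naturality := i.op.lanUnit.naturality (uliftYonedaIsoYoneda.{u, u, u}.hom.app a)
  dsimp only [Functor.id_obj, Functor.comp_obj, Functor.whiskeringLeft_obj_obj, Functor.id_map,
    Functor.comp_map, Functor.whiskeringLeft_obj_map] at lanUnit_naturality
  simp only [Presheaf.compYonedaIsoYonedaCompLan, Iso.trans_hom, Functor.isoWhiskerLeft_hom,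
    Iso.symm_hom, Functor.isoWhiskerRight_hom, NatTrans.comp_app, Functor.whiskerLeft_app,
    Functor.whiskerRight_app, Functor.whiskerLeft_comp]
  rw [reassoc_of% yonedaMap_eq, reassoc_of% ulift_fac, ← lanUnit_naturality, Iso.inv_hom_id_app_assoc]

lemma compYonedaIsoYonedaCompLan_hom_app_comp_lan_map_canNat_app_comp_counit_app (a : A) :
    (Presheaf.compYonedaIsoYonedaCompLan i).hom.app a ≫ i.op.lan.map ((canNat i).app a) ≫
      (i.op.lanAdjunction (Type u)).counit.app (yoneda.obj (i.obj a)) =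
    𝟙 (yoneda.obj (i.obj a)) := by
  apply (yoneda.obj (i.obj a)).hom_ext_of_isLeftKanExtension (yonedaMap i a)
  have lanUnit_naturality := i.op.lanUnit.naturality ((canNat i).app a)
  have triangle := (i.op.lanAdjunction (Type u)).right_triangle_components (yoneda.obj (i.obj a))
  rw [Functor.lanAdjunction_unit] at triangle
  dsimp only [Functor.whiskeringLeft_obj_obj, Functor.whiskeringLeft_obj_map, Functor.id_obj,
    Functor.comp_obj, Functor.id_map, Functor.comp_map, Functor.whiskerLeft_comp,
    Functor.whiskerLeft_id'] at lanUnit_naturality triangle ⊢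
  rw [reassoc_of% yonedaMap_comp_whiskerLeft_compYonedaIsoYonedaCompLan_hom_app,
    ← reassoc_of% lanUnit_naturality, triangle]
  rfl

end

section

variable (i : A ⥤ B) (F : B ⥤ C) (a : A)

lemma leftKanExtensionUnit_app_comp_kappa_app :
    (i.leftKanExtensionUnit (i ⋙ F)).app a ≫ (kappa i F).app (i.obj a) = 𝟙 (F.obj (i.obj a)) :=
  Functor.descOfIsLeftKanExtension_fac_app _ _ _ _ a

lemma leftKanExtensionUnit_app_comp_cComp_app :
    (i.leftKanExtensionUnit (i ⋙ F)).app a ≫ (cComp i F).app (i.obj a) =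
      ((i ⋙ yoneda).leftKanExtensionUnit (i ⋙ F)).app a := by
  rw [cComp]
  exact (Functor.descOfIsLeftKanExtension_fac_app _ _ _ _ a).trans (by simp)

lemma leftKanExtensionUnit_app_comp_dTwo_app :
    ((i ⋙ yoneda).leftKanExtensionUnit (i ⋙ F)).app a ≫ (dTwo i F).app (yoneda.obj (i.obj a)) =
      (yoneda.leftKanExtensionUnit (i ⋙ F)).app a ≫
        (yoneda.leftKanExtension (i ⋙ F)).map ((canNat i).app a) := by
  rw [dTwo]
  exact (Functor.descOfIsLeftKanExtension_fac_app _ _ _ _ a).trans (by simp)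

lemma leftKanExtensionUnit_app_comp_dOne_app :
    (yoneda.leftKanExtensionUnit (i ⋙ F)).app a ≫ (dOne i F).app (yoneda.obj a) =
      (yoneda.leftKanExtensionUnit F).app (i.obj a) ≫
        (yoneda.leftKanExtension F).map ((Presheaf.compYonedaIsoYonedaCompLan i).hom.app a) := by
  rw [dOne]
  exact (Functor.descOfIsLeftKanExtension_fac_app _ _ _ _ a).trans (by simp)

lemma leftKanExtensionUnit_app_comp_theta_app :
    ((i ⋙ yoneda).leftKanExtensionUnit (i ⋙ F)).app a ≫ (theta i F).app (yoneda.obj (i.obj a)) =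
      (yoneda.leftKanExtensionUnit F).app (i.obj a) := by
  have dOne_naturality := (dOne i F).naturality ((canNat i).app a)
  dsimp only [Functor.comp_obj, Functor.whiskeringLeft_obj_obj, Functor.comp_map] at dOne_naturality
  dsimp only [theta, Functor.comp_obj, NatTrans.comp_app, Functor.whiskeringLeft_obj_obj,
    Functor.whiskerLeft_app, Functor.associator_inv_app, Functor.id_obj, Functor.whiskerRight_app,
    Functor.leftUnitor_hom_app]
  rw [Category.comp_id, reassoc_of% leftKanExtensionUnit_app_comp_dTwo_app,
    reassoc_of% dOne_naturality, reassoc_of% leftKanExtensionUnit_app_comp_dOne_app]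
  simp only [Category.id_comp, ← Functor.map_comp]
  rw [compYonedaIsoYonedaCompLan_hom_app_comp_lan_map_canNat_app_comp_counit_app,
    CategoryTheory.Functor.map_id, Category.comp_id]

end

theorem statement5 :
    cComp i F ≫ Functor.whiskerLeft yoneda (theta i F) =
      kappa i F ≫ yoneda.leftKanExtensionUnit F := by
  apply (i.leftKanExtension (i ⋙ F)).hom_ext_of_isLeftKanExtension (i.leftKanExtensionUnit (i ⋙ F))
  ext a
  dsimp only [Functor.comp_obj, Functor.whiskerLeft_comp, NatTrans.comp_app, Functor.whiskerLeft_app]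
  rw [reassoc_of% leftKanExtensionUnit_app_comp_cComp_app, leftKanExtensionUnit_app_comp_theta_app,
    reassoc_of% leftKanExtensionUnit_app_comp_kappa_app]
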